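/- For any even integer r ≥ 2, the r-th normalized Hermite coefficient of the Leaky ReLU function φ(x) = max(x, αx) with α ∈ (0,1) equals ((1-α)/√(2π)) · (-1)^{(r-2)/2} · (r-3)!! / √(r!). -/

import Mathlib

open Polynomial Real Filter MeasureTheory Set

open Polynomial Real Filter MeasureTheory Set

lemma derivative_hermite_succ (n : ℕ) :
    derivative (hermite (n + 1)) = ((n : ℤ) + 1) • hermite n := by
  induction n with
  | zero => simp [hermite_one]
  | succ n ih =>
    rw [hermite_succ (n + 1)]
    rw [derivative_sub, derivative_mul, derivative_X, one_mul, ih]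
    rw [derivative_smul, mul_smul_comm, add_sub_assoc, ← smul_sub, ← hermite_succ]
    push_cast
    module

lemma tendsto_polyGauss_atTop (q : ℝ[X]) {c : ℝ} (hc : 0 < c) :
    Tendsto (fun x : ℝ => q.eval x * Real.exp (-(x ^ 2 / c))) atTop (nhds 0) := by
  have h0 : Tendsto (fun x : ℝ => |q.eval x * Real.exp (-x)|) atTop (nhds 0) := by
    have := q.tendsto_div_exp_atTop
    have h := this.abs
    simp only [abs_zero] at h
    refine h.congr fun x => ?_
    rw [div_eq_mul_inv, ← Real.exp_neg]
  refine squeeze_zero_norm' ?_ h0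
  filter_upwards [eventually_ge_atTop c, eventually_ge_atTop 0] with x hx hx0
  rw [Real.norm_eq_abs, abs_mul, abs_mul, Real.abs_exp, Real.abs_exp]
  have : x ≤ x ^ 2 / c := by
    rw [le_div_iff₀ hc]
    nlinarith
  exact mul_le_mul_of_nonneg_left (Real.exp_le_exp.2 (by linarith)) (abs_nonneg _)

lemma tendsto_polyGauss_atBot (q : ℝ[X]) {c : ℝ} (hc : 0 < c) :
    Tendsto (fun x : ℝ => q.eval x * Real.exp (-(x ^ 2 / c))) atBot (nhds 0) := by
  have h := (tendsto_polyGauss_atTop (q.comp (-X)) hc).comp tendsto_neg_atBot_atTop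
  refine h.congr fun x => ?_
  show eval (-x) (q.comp (-X)) * Real.exp (-((-x) ^ 2 / c)) = _
  rw [eval_comp, eval_neg, eval_X, neg_neg, neg_sq]

lemma bounded_polyGauss (q : ℝ[X]) :
    ∃ M : ℝ, ∀ x : ℝ, |q.eval x * Real.exp (-(x ^ 2 / 4))| ≤ M := by
  have hct : Continuous fun x : ℝ => |q.eval x * Real.exp (-(x ^ 2 / 4))| :=
    (q.continuous.mul (by continuity)).abs
  obtain ⟨A, hA⟩ := (((tendsto_polyGauss_atTop q (by norm_num : (0:ℝ) < 4)).abs.eventually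
    (eventually_le_nhds (by norm_num : |(0:ℝ)| < 1)))).exists_forall_of_atTop
  obtain ⟨B, hB⟩ := (((tendsto_polyGauss_atBot q (by norm_num : (0:ℝ) < 4)).abs.eventually
    (eventually_le_nhds (by norm_num : |(0:ℝ)| < 1)))).exists_forall_of_atBot
  obtain ⟨C, hC⟩ := (isCompact_Icc (a := B) (b := A)).exists_bound_of_continuousOn
    hct.continuousOn
  refine ⟨max 1 C, fun x => ?_⟩
  rcases le_total x A with hxA | hxA
  · rcases le_total B x with hBx | hBx
    · exact le_trans (by simpa using hC x ⟨hBx, hxA⟩) (le_max_right _ _)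
    · exact le_trans (hB x hBx) (le_max_left _ _)
  · exact le_trans (hA x hxA) (le_max_left _ _)

lemma integrable_polyGauss (q : ℝ[X]) :
    Integrable (fun x : ℝ => q.eval x * Real.exp (-(x ^ 2 / 2))) := by
  obtain ⟨M, hM⟩ := bounded_polyGauss q
  have hMint : Integrable (fun x : ℝ => M * Real.exp (-(1/4 : ℝ) * x ^ 2)) :=
    (integrable_exp_neg_mul_sq (by norm_num)).const_mul M
  refine hMint.mono' ((q.continuous.mul (by continuity)).aestronglyMeasurable) ?_
  filter_upwards with x
  have hsplit : Real.exp (-(x ^ 2 / 2)) =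
      Real.exp (-(x ^ 2 / 4)) * Real.exp (-(1/4 : ℝ) * x ^ 2) := by
    rw [← Real.exp_add]; ring_nf
  rw [Real.norm_eq_abs, hsplit, ← mul_assoc, abs_mul, Real.abs_exp]
  have h1 := hM x
  have h2 : (0:ℝ) < Real.exp (-(1/4 : ℝ) * x ^ 2) := Real.exp_pos _
  calc |q.eval x * Real.exp (-(x ^ 2 / 4))| * Real.exp (-(1/4:ℝ) * x ^ 2)
      ≤ M * Real.exp (-(1/4:ℝ) * x ^ 2) :=
        mul_le_mul_of_nonneg_right h1 h2.le

lemma expGauss_hasDerivAt (x : ℝ) :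
    HasDerivAt (fun y : ℝ => Real.exp (-(y ^ 2 / 2))) (-x * Real.exp (-(x ^ 2 / 2))) x := by
  have h : HasDerivAt (fun y : ℝ => -(y ^ 2 / 2)) (-x) x := by
    have := ((hasDerivAt_pow 2 x).div_const 2).neg
    refine this.congr_deriv ?_
    ring
  simpa [mul_comm] using h.exp

lemma hermiteGauss_hasDerivAt (n : ℕ) (x : ℝ) :
    HasDerivAt (fun y : ℝ => -((aeval y (hermite n) : ℝ) * Real.exp (-(y ^ 2 / 2))))
      ((aeval x (hermite (n + 1)) : ℝ) * Real.exp (-(x ^ 2 / 2))) x := by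
  have h1 : HasDerivAt (fun y : ℝ => (aeval y (hermite n) : ℝ))
      ((aeval x (derivative (hermite n)) : ℝ)) x := Polynomial.hasDerivAt_aeval (q := hermite n) x
  have h := (h1.mul (expGauss_hasDerivAt x)).neg
  refine h.congr_deriv ?_
  rw [hermite_succ, map_sub, map_mul, aeval_X]
  ring

lemma aeval_eq_eval_map (p : ℤ[X]) (x : ℝ) :
    (aeval x p : ℝ) = (p.map (Int.castRingHom ℝ)).eval x := by
  rw [aeval_def, eval₂_eq_eval_map]; rfl

lemma integrable_hermiteGauss (p : ℤ[X]) :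
    Integrable (fun x : ℝ => (aeval x p : ℝ) * Real.exp (-(x ^ 2 / 2))) := by
  have := integrable_polyGauss (p.map (Int.castRingHom ℝ))
  refine this.congr ?_
  filter_upwards with x
  rw [aeval_eq_eval_map]

lemma tendsto_hermiteGauss_atTop (p : ℤ[X]) :
    Tendsto (fun x : ℝ => (aeval x p : ℝ) * Real.exp (-(x ^ 2 / 2))) atTop (nhds 0) := by
  refine (tendsto_polyGauss_atTop (p.map (Int.castRingHom ℝ)) two_pos).congr fun x => ?_
  rw [aeval_eq_eval_map]

lemma tendsto_hermiteGauss_atBot (p : ℤ[X]) :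
    Tendsto (fun x : ℝ => (aeval x p : ℝ) * Real.exp (-(x ^ 2 / 2))) atBot (nhds 0) := by
  refine (tendsto_polyGauss_atBot (p.map (Int.castRingHom ℝ)) two_pos).congr fun x => ?_
  rw [aeval_eq_eval_map]

lemma contHG (n : ℕ) : Continuous (fun x : ℝ => (aeval x (hermite n) : ℝ) * Real.exp (-(x ^ 2 / 2))) :=
  (Polynomial.continuous_aeval (hermite n)).mul (by continuity)

lemma int_Ioi_hermiteGauss (n : ℕ) :
    ∫ x in Ioi (0:ℝ), (aeval x (hermite (n + 1)) : ℝ) * Real.exp (-(x ^ 2 / 2)) =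
      (aeval (0:ℝ) (hermite n) : ℝ) := by
  have h := integral_Ioi_of_hasDerivAt_of_tendsto
    (f := fun y : ℝ => -((aeval y (hermite n) : ℝ) * Real.exp (-(y ^ 2 / 2))))
    (f' := fun x : ℝ => (aeval x (hermite (n + 1)) : ℝ) * Real.exp (-(x ^ 2 / 2)))
    (a := 0) (m := 0)
    ((contHG n).neg.continuousWithinAt)
    (fun x _ => hermiteGauss_hasDerivAt n x)
    (integrable_hermiteGauss (hermite (n + 1))).integrableOn
    (by simpa using (tendsto_hermiteGauss_atTop (hermite n)).neg)
  rw [h]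
  norm_num

lemma int_Iic_hermiteGauss (n : ℕ) :
    ∫ x in Iic (0:ℝ), (aeval x (hermite (n + 1)) : ℝ) * Real.exp (-(x ^ 2 / 2)) =
      -(aeval (0:ℝ) (hermite n) : ℝ) := by
  have h := integral_Iic_of_hasDerivAt_of_tendsto
    (f := fun y : ℝ => -((aeval y (hermite n) : ℝ) * Real.exp (-(y ^ 2 / 2))))
    (f' := fun x : ℝ => (aeval x (hermite (n + 1)) : ℝ) * Real.exp (-(x ^ 2 / 2)))
    (a := 0) (m := 0)
    ((contHG n).neg.continuousWithinAt)
    (fun x _ => hermiteGauss_hasDerivAt n x)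
    (integrable_hermiteGauss (hermite (n + 1))).integrableOn
    (by simpa using (tendsto_hermiteGauss_atBot (hermite n)).neg)
  rw [h]
  norm_num

lemma x_mul_hermite (m : ℕ) (x : ℝ) :
    x * (aeval x (hermite (m + 1)) : ℝ) =
      (aeval x (hermite (m + 2)) : ℝ) + ((m : ℝ) + 1) * (aeval x (hermite m) : ℝ) := by
  have h : hermite (m + 2) = X * hermite (m + 1) - ((m : ℤ) + 1) • hermite m := by
    rw [hermite_succ (m + 1), derivative_hermite_succ]
  have := congrArg (fun p => (aeval x p : ℝ)) h
  simp only [map_sub, map_mul, aeval_X, map_zsmul, zsmul_eq_mul, map_add, map_one, map_natCast, map_intCast] at this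
  push_cast at this ⊢
  linarith

lemma int_Ioi_x_hermiteGauss (m : ℕ) :
    ∫ x in Ioi (0:ℝ), x * (aeval x (hermite (m + 2)) : ℝ) * Real.exp (-(x ^ 2 / 2)) =
      (aeval (0:ℝ) (hermite (m + 2)) : ℝ) + ((m : ℝ) + 2) * (aeval (0:ℝ) (hermite m) : ℝ) := by
  have hcg : ∀ x : ℝ, x * (aeval x (hermite (m + 2)) : ℝ) * Real.exp (-(x ^ 2 / 2)) =
      (aeval x (hermite (m + 3)) : ℝ) * Real.exp (-(x ^ 2 / 2)) +
        ((m : ℝ) + 2) * ((aeval x (hermite (m + 1)) : ℝ) * Real.exp (-(x ^ 2 / 2))) := by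
    intro x
    rw [show (m:ℝ) + 2 = ((m + 1 : ℕ) : ℝ) + 1 by push_cast; ring,
      show m + 3 = (m + 1) + 2 from rfl, show m + 2 = (m + 1) + 1 from rfl,
      x_mul_hermite (m + 1) x]
    ring
  simp_rw [hcg]
  rw [integral_add (integrable_hermiteGauss (hermite (m + 3))).integrableOn
    (((integrable_hermiteGauss (hermite (m + 1))).const_mul _).integrableOn),
    integral_const_mul, int_Ioi_hermiteGauss (m + 2), int_Ioi_hermiteGauss m]

lemma int_Iic_x_hermiteGauss (m : ℕ) :
    ∫ x in Iic (0:ℝ), x * (aeval x (hermite (m + 2)) : ℝ) * Real.exp (-(x ^ 2 / 2)) =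
      -((aeval (0:ℝ) (hermite (m + 2)) : ℝ) + ((m : ℝ) + 2) * (aeval (0:ℝ) (hermite m) : ℝ)) := by
  have hcg : ∀ x : ℝ, x * (aeval x (hermite (m + 2)) : ℝ) * Real.exp (-(x ^ 2 / 2)) =
      (aeval x (hermite (m + 3)) : ℝ) * Real.exp (-(x ^ 2 / 2)) +
        ((m : ℝ) + 2) * ((aeval x (hermite (m + 1)) : ℝ) * Real.exp (-(x ^ 2 / 2))) := by
    intro x
    rw [show (m:ℝ) + 2 = ((m + 1 : ℕ) : ℝ) + 1 by push_cast; ring,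
      show m + 3 = (m + 1) + 2 from rfl, show m + 2 = (m + 1) + 1 from rfl,
      x_mul_hermite (m + 1) x]
    ring
  simp_rw [hcg]
  rw [integral_add (integrable_hermiteGauss (hermite (m + 3))).integrableOn
    (((integrable_hermiteGauss (hermite (m + 1))).const_mul _).integrableOn),
    integral_const_mul, int_Iic_hermiteGauss (m + 2), int_Iic_hermiteGauss m]
  ring

lemma aeval_zero_hermite (j : ℕ) :
    (aeval (0:ℝ) (hermite (2 * j)) : ℝ) = (-1 : ℝ) ^ j * (Nat.doubleFactorial (2 * j - 1)) := by
  have h0 : (aeval (0:ℝ) (hermite (2 * j)) : ℝ) = (((hermite (2 * j)).coeff 0 : ℤ) : ℝ) := by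
    rw [aeval_eq_eval_map, ← coeff_zero_eq_eval_zero, coeff_map]
    rfl
  have := coeff_hermite_explicit j 0
  rw [h0, show 2 * j + 0 = 2 * j from rfl] at *
  rw [this]
  push_cast [Nat.choose_zero_right]
  ring

lemma doubleFactorial_odd (j : ℕ) :
    Nat.doubleFactorial (2 * j + 1) = (2 * j + 1) * Nat.doubleFactorial (2 * j - 1) := by
  cases j with
  | zero => rfl
  | succ j =>
    rw [show 2 * (j + 1) + 1 = (2 * j + 1) + 2 from rfl, Nat.doubleFactorial_add_two]
    congr 1 <;> omega

lemma abs_max_le (α x : ℝ) (hα0 : 0 < α) (hα1 : α < 1) : |max x (α * x)| ≤ |x| := by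
  refine abs_le.2 ⟨le_trans (neg_abs_le x) (le_max_left _ _), max_le (le_abs_self x) ?_⟩
  nlinarith [mul_nonneg (sub_nonneg.2 hα1.le) (abs_nonneg x),
    mul_nonneg hα0.le (sub_nonneg.2 (le_abs_self x))]

lemma main_lebesgue (α : ℝ) (hα0 : 0 < α) (hα1 : α < 1) (m : ℕ) :
    ∫ x : ℝ, max x (α * x) * (aeval x (hermite (m + 2)) : ℝ) * Real.exp (-(x ^ 2 / 2)) =
      (1 - α) * ((aeval (0:ℝ) (hermite (m + 2)) : ℝ) +
        ((m : ℝ) + 2) * (aeval (0:ℝ) (hermite m) : ℝ)) := by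
  set F := fun x : ℝ => max x (α * x) * (aeval x (hermite (m + 2)) : ℝ) * Real.exp (-(x ^ 2 / 2))
    with hF
  have hFcont : Continuous F :=
    ((continuous_id.max (continuous_const.mul continuous_id)).mul
      (Polynomial.continuous_aeval _)).mul (by continuity)
  have hFi : Integrable F := by
    refine (integrable_hermiteGauss (X * hermite (m + 2))).abs.mono'
      hFcont.aestronglyMeasurable ?_
    filter_upwards with x
    rw [hF]
    simp only [map_mul, aeval_X]
    rw [Real.norm_eq_abs, abs_mul, abs_mul, abs_mul, abs_mul, Real.abs_exp]
    have h1 : |max x (α * x)| ≤ |x| := abs_max_le α x hα0 hα1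
    have h2 : (0:ℝ) ≤ |(aeval x (hermite (m + 2)) : ℝ)| * Real.exp (-(x ^ 2 / 2)) :=
      mul_nonneg (abs_nonneg _) (Real.exp_pos _).le
    calc |max x (α * x)| * |(aeval x (hermite (m + 2)) : ℝ)| * Real.exp (-(x ^ 2 / 2))
        ≤ |x| * |(aeval x (hermite (m + 2)) : ℝ)| * Real.exp (-(x ^ 2 / 2)) := by
          apply mul_le_mul_of_nonneg_right _ (Real.exp_pos _).le
          exact mul_le_mul_of_nonneg_right h1 (abs_nonneg _)
      _ = _ := by rfl
  have hsplit : ∫ x, F x = (∫ x in Iic (0:ℝ), F x) + ∫ x in Ioi (0:ℝ), F x :=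
    (intervalIntegral.integral_Iic_add_Ioi hFi.integrableOn hFi.integrableOn).symm
  have hIic : ∫ x in Iic (0:ℝ), F x =
      α * -((aeval (0:ℝ) (hermite (m + 2)) : ℝ) +
        ((m : ℝ) + 2) * (aeval (0:ℝ) (hermite m) : ℝ)) := by
    rw [show ∫ x in Iic (0:ℝ), F x = ∫ x in Iic (0:ℝ),
        α * (x * (aeval x (hermite (m + 2)) : ℝ) * Real.exp (-(x ^ 2 / 2))) from
      setIntegral_congr_fun measurableSet_Iic fun x hx => by
        rw [hF]
        simp only
        rw [max_eq_right (by simp only [mem_Iic] at hx; nlinarith)]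
        ring]
    rw [integral_const_mul, int_Iic_x_hermiteGauss]
  have hIoi : ∫ x in Ioi (0:ℝ), F x =
      (aeval (0:ℝ) (hermite (m + 2)) : ℝ) +
        ((m : ℝ) + 2) * (aeval (0:ℝ) (hermite m) : ℝ) := by
    rw [show ∫ x in Ioi (0:ℝ), F x = ∫ x in Ioi (0:ℝ),
        x * (aeval x (hermite (m + 2)) : ℝ) * Real.exp (-(x ^ 2 / 2)) from
      setIntegral_congr_fun measurableSet_Ioi fun x hx => by
        rw [hF]
        simp only
        rw [max_eq_left (by simp only [mem_Ioi] at hx; nlinarith)]]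
    rw [int_Ioi_x_hermiteGauss]
  rw [hsplit, hIic, hIoi]
  ring


open MeasureTheory ProbabilityTheory

/-- For any even `r ≥ 2`, the `r`-th normalized (probabilists') Hermite coefficient of
the Leaky ReLU `φ(x) = max(x, αx)` with `α ∈ (0,1)` equals
`((1-α)/√(2π)) · (-1)^{(r-2)/2} · (r-3)‼ / √(r!)`. -/
theorem hermite_coeff_leakyRelu (α : ℝ) (hα0 : 0 < α) (hα1 : α < 1)
    (r : ℕ) (hr : 2 ≤ r) (hre : Even r) :
    ∫ x, max x (α * x) * (Polynomial.aeval x (Polynomial.hermite r)) /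
        Real.sqrt (r.factorial) ∂(gaussianReal 0 1) =
      (1 - α) / Real.sqrt (2 * Real.pi) * (-1 : ℝ) ^ ((r - 2) / 2) *
        (Nat.doubleFactorial (r - 3)) / Real.sqrt (r.factorial) := by
  obtain ⟨m, rfl⟩ : ∃ m, r = m + 2 := ⟨r - 2, by omega⟩
  obtain ⟨j, hj⟩ : ∃ j, m = 2 * j := by
    rcases hre with ⟨k, hk⟩; exact ⟨k - 1, by omega⟩
  subst hj
  rw [integral_div]
  congr 1
  -- convert gaussian integral to Lebesgue
  rw [gaussianReal_of_var_ne_zero 0 one_ne_zero]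
  rw [show gaussianPDF 0 1 = fun x => ((Real.toNNReal (gaussianPDFReal 0 1 x) : NNReal) : ENNReal)
    from rfl]
  rw [integral_withDensity_eq_integral_smul
    ((measurable_gaussianPDFReal 0 1).real_toNNReal) _]
  have hpt : ∀ x : ℝ, (Real.toNNReal (gaussianPDFReal 0 1 x)) •
      (max x (α * x) * (aeval x (hermite (2 * j + 2)) : ℝ)) =
      (Real.sqrt (2 * Real.pi))⁻¹ *
        (max x (α * x) * (aeval x (hermite (2 * j + 2)) : ℝ) * Real.exp (-(x ^ 2 / 2))) := by
    intro x
    rw [NNReal.smul_def, Real.coe_toNNReal _ (gaussianPDFReal_nonneg 0 1 x), smul_eq_mul]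
    rw [gaussianPDFReal]
    push_cast
    rw [mul_one, sub_zero]
    rw [show -x ^ 2 / (2 * 1) = -(x ^ 2 / 2) by ring]
    ring
  simp_rw [hpt]
  rw [integral_const_mul, main_lebesgue α hα0 hα1 (2 * j)]
  -- evaluate hermite values at zero
  rw [show 2 * j + 2 = 2 * (j + 1) from by ring, aeval_zero_hermite (j + 1), aeval_zero_hermite j]
  rw [show 2 * (j + 1) - 2 = 2 * j from by omega, show 2 * (j + 1) - 3 = 2 * j - 1 from by omega,
    show (2 * j) / 2 = j from by omega]
  have hdf : ((Nat.doubleFactorial (2 * (j + 1) - 1) : ℝ)) =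
      (2 * (j : ℝ) + 1) * (Nat.doubleFactorial (2 * j - 1) : ℝ) := by
    rw [show 2 * (j + 1) - 1 = 2 * j + 1 from by omega, doubleFactorial_odd j]
    push_cast
    ring
  rw [hdf]
  push_cast
  ring
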